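/- Let n ≥ 3. There exists an invertible (n−1)×(n−1) real matrix P such that P⁻¹ · 𝓜 · P = ℛ_n; that is, the matrix 𝓜 is conjugate over ℝ to the block-rotation matrix ℛ_n. -/

import Mathlib

noncomputable section

/-- The `(n-1) × (n-1)` real matrix of the linear map
`𝓜(x₁,…,x_{n-1}) = (x₂ − x₁, …, x_{n-1} − x₁, −x₁)` in the standard basis. -/
def Mmat (n : ℕ) : Matrix (Fin (n - 1)) (Fin (n - 1)) ℝ :=
  Matrix.of fun i j =>
    (if (j : ℕ) = (i : ℕ) + 1 then (1 : ℝ) else 0) - (if (j : ℕ) = 0 then 1 else 0)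

/-- The block-rotation matrix `ℛ_n`: block diagonal with `2 × 2` rotation blocks
`R_{2π/n}, R_{2·2π/n}, …` (the block with index `b` rotates by `(b+1)·2π/n`), followed,
when `n` is even, by a final `1 × 1` entry `−1`. -/
def Rmat (n : ℕ) : Matrix (Fin (n - 1)) (Fin (n - 1)) ℝ :=
  Matrix.of fun i j =>
    let b : ℕ := (i : ℕ) / 2
    let θ : ℝ := 2 * Real.pi * ((b : ℝ) + 1) / n
    if (i : ℕ) % 2 = 0 then
      if (i : ℕ) + 1 < n - 1 then
        -- row of a 2×2 rotation block: (cos θ, −sin θ)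
        if (j : ℕ) = (i : ℕ) then Real.cos θ
        else if (j : ℕ) = (i : ℕ) + 1 then -Real.sin θ else 0
      else
        -- final 1×1 block −1 (even n)
        if j = i then -1 else 0
    else
      -- second row of a 2×2 rotation block: (sin θ, cos θ)
      if (j : ℕ) = (i : ℕ) - 1 then Real.sin θ
      else if (j : ℕ) = (i : ℕ) then Real.cos θ else 0

open Complex Finset

lemma sum_exp_root (n : ℕ) (hn : 0 < n) (m : ℤ) :
    ∑ k ∈ Finset.range (n-1), Complex.exp (2 * Real.pi * I * m * ((k:ℂ)+1) / n)
      = if (n:ℤ) ∣ m then ((n:ℂ) - 1) else -1 := by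
  have hn0 : (n:ℂ) ≠ 0 := Nat.cast_ne_zero.mpr hn.ne'
  have hπ : (Real.pi : ℂ) ≠ 0 := Complex.ofReal_ne_zero.mpr Real.pi_ne_zero
  set z : ℂ := Complex.exp (2 * Real.pi * I * m / n) with hz
  have hterm : ∀ k : ℕ, Complex.exp (2 * Real.pi * I * m * ((k:ℂ)+1) / n) = z ^ (k+1) := by
    intro k
    rw [hz, ← Complex.exp_nat_mul]
    congr 1
    push_cast
    ring
  have hzn : z ^ n = 1 := by
    rw [hz, ← Complex.exp_nat_mul,
      show (n:ℂ) * (2 * Real.pi * I * m / n) = m * (2 * Real.pi * I) by field_simp]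
    exact Complex.exp_int_mul_two_pi_mul_I m
  have hz1 : z = 1 ↔ (n:ℤ) ∣ m := by
    rw [hz, Complex.exp_eq_one_iff]
    constructor
    · rintro ⟨t, ht⟩
      have h2 : (m:ℂ) = n * t := by
        have key : (2 * (Real.pi:ℂ) * I) * (m : ℂ) = (2 * (Real.pi:ℂ) * I) * (n * t) := by
          field_simp at ht
          linear_combination (2 * (Real.pi:ℂ) * I) * ht
        exact mul_left_cancel₀ (by simp [hπ, Complex.I_ne_zero]) key
      exact ⟨t, by exact_mod_cast h2⟩
    · rintro ⟨t, rfl⟩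
      exact ⟨t, by field_simp; push_cast; ring⟩
  have hsum : ∑ k ∈ Finset.range (n-1), Complex.exp (2 * Real.pi * I * m * ((k:ℂ)+1) / n)
      = (∑ k ∈ Finset.range n, z ^ k) - 1 := by
    rw [Finset.sum_congr rfl (fun k _ => hterm k)]
    have h1 : ∑ k ∈ Finset.range ((n-1)+1), z ^ k
        = (∑ k ∈ Finset.range (n-1), z ^ (k+1)) + z ^ 0 := Finset.sum_range_succ' _ _
    rw [Nat.sub_add_cancel hn] at h1
    rw [h1, pow_zero]; ring
  rw [hsum]
  by_cases hd : (n:ℤ) ∣ m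
  · have hzz : z = 1 := hz1.mpr hd
    simp [hd, hzz]
  · have hzne : z ≠ 1 := fun h => hd (hz1.mp h)
    rw [if_neg hd, geom_sum_eq hzne, hzn]
    simp

lemma sum_cos_root (n : ℕ) (hn : 0 < n) (m : ℤ) :
    ∑ k ∈ Finset.range (n-1), Real.cos (2 * Real.pi * m * ((k:ℝ)+1) / n)
      = if (n:ℤ) ∣ m then ((n:ℝ) - 1) else -1 := by
  have h := sum_exp_root n hn m
  have hre : ∀ k : ℕ, Complex.exp (2 * Real.pi * I * m * ((k:ℂ)+1) / n)
      = Complex.exp ((2 * Real.pi * m * ((k:ℝ)+1) / n : ℝ) * I) := by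
    intro k; congr 1; push_cast; ring
  rw [Finset.sum_congr rfl (fun k _ => hre k)] at h
  have h2 : ∑ k ∈ Finset.range (n-1), Real.cos (2 * Real.pi * m * ((k:ℝ)+1) / n)
      = (∑ k ∈ Finset.range (n-1), Complex.exp ((2 * Real.pi * m * ((k:ℝ)+1) / n : ℝ) * I)).re := by
    rw [Complex.re_sum]
    exact Finset.sum_congr rfl fun k _ => (Complex.exp_ofReal_mul_I_re _).symm
  rw [h2, h]
  split_ifs <;> simp

lemma sum_sin_root (n : ℕ) (hn : 0 < n) (m : ℤ) :
    ∑ k ∈ Finset.range (n-1), Real.sin (2 * Real.pi * m * ((k:ℝ)+1) / n) = 0 := by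
  have h := sum_exp_root n hn m
  have hre : ∀ k : ℕ, Complex.exp (2 * Real.pi * I * m * ((k:ℂ)+1) / n)
      = Complex.exp ((2 * Real.pi * m * ((k:ℝ)+1) / n : ℝ) * I) := by
    intro k; congr 1; push_cast; ring
  rw [Finset.sum_congr rfl (fun k _ => hre k)] at h
  have h2 : ∑ k ∈ Finset.range (n-1), Real.sin (2 * Real.pi * m * ((k:ℝ)+1) / n)
      = (∑ k ∈ Finset.range (n-1), Complex.exp ((2 * Real.pi * m * ((k:ℝ)+1) / n : ℝ) * I)).im := by
    rw [Complex.im_sum]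
    exact Finset.sum_congr rfl fun k _ => (Complex.exp_ofReal_mul_I_im _).symm
  rw [h2, h]
  split_ifs <;> simp
open Finset

noncomputable def Pθ (n b : ℕ) : ℝ := 2 * Real.pi * ((b:ℝ) + 1) / n

noncomputable def Pm (n : ℕ) : Matrix (Fin (n-1)) (Fin (n-1)) ℝ :=
  Matrix.of fun i j =>
    if (j : ℕ) % 2 = 0 then Real.cos (((i:ℕ)+1) * Pθ n ((j:ℕ)/2)) - 1
    else -Real.sin (((i:ℕ)+1) * Pθ n ((j:ℕ)/2))

noncomputable def Qm (n : ℕ) : Matrix (Fin (n-1)) (Fin (n-1)) ℝ :=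
  Matrix.of fun i k =>
    if (i : ℕ) % 2 = 0 then Real.cos (((k:ℕ)+1) * Pθ n ((i:ℕ)/2))
    else -Real.sin (((k:ℕ)+1) * Pθ n ((i:ℕ)/2))

lemma sum_ite_coe {N : ℕ} (c : ℕ) (f : Fin N → ℝ) :
    (∑ k : Fin N, (if (k:ℕ) = c then (1:ℝ) else 0) * f k)
      = if h : c < N then f ⟨c, h⟩ else 0 := by
  split_ifs with h
  · have hc : ∀ k : Fin N, ((if (k:ℕ) = c then (1:ℝ) else 0) * f k)
        = if k = ⟨c,h⟩ then f k else 0 := by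
      intro k
      by_cases hk : k = ⟨c, h⟩
      · simp [hk]
      · have : (k:ℕ) ≠ c := fun hh => hk (Fin.ext hh)
        simp [this, hk]
    rw [Finset.sum_congr rfl (fun k _ => hc k)]
    simp
  · apply Finset.sum_eq_zero
    intro k _
    have : (k:ℕ) ≠ c := by have := k.2; omega
    simp [this]

-- test unfolding of Mmat-sum
lemma mulM_row (n : ℕ) (hn : 3 ≤ n) (M : Matrix (Fin (n-1)) (Fin (n-1)) ℝ)
    (hM : ∀ i j, M i j = (if (j : ℕ) = (i : ℕ) + 1 then (1:ℝ) else 0) - (if (j : ℕ) = 0 then 1 else 0))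
    (i j : Fin (n-1)) :
    (M * Pm n) i j
      = (if h : (i:ℕ)+1 < n-1 then Pm n ⟨(i:ℕ)+1, h⟩ j else 0) - Pm n ⟨0, by omega⟩ j := by
  rw [Matrix.mul_apply]
  simp only [hM, sub_mul, one_mul]
  rw [Finset.sum_sub_distrib, sum_ite_coe, sum_ite_coe]
  simp only [dif_pos (show 0 < n-1 by omega)]

lemma R_col_even (n : ℕ) (hn : 3 ≤ n) (j : Fin (n-1)) (hj : (j:ℕ) % 2 = 0)
    (hj1 : (j:ℕ) + 1 < n - 1) (k : Fin (n-1)) :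
    Rmat n k j = (if (k:ℕ) = (j:ℕ) then Real.cos (Pθ n ((j:ℕ)/2)) else 0)
      + (if (k:ℕ) = (j:ℕ)+1 then Real.sin (Pθ n ((j:ℕ)/2)) else 0) := by
  simp only [Rmat, Matrix.of_apply, Fin.ext_iff, Pθ]
  have hk2 := k.2
  have hj2 := j.2
  split_ifs <;> first
    | rfl
    | omega
    | (have hd : (k:ℕ)/2 = (j:ℕ)/2 := by omega
       rw [hd]; ring)
    | simp_all

lemma R_col_last (n : ℕ) (hn : 3 ≤ n) (j : Fin (n-1)) (hj : (j:ℕ) % 2 = 0)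
    (hj1 : ¬ ((j:ℕ) + 1 < n - 1)) (k : Fin (n-1)) :
    Rmat n k j = (if (k:ℕ) = (j:ℕ) then (-1 : ℝ) else 0) := by
  simp only [Rmat, Matrix.of_apply, Fin.ext_iff]
  have hk2 := k.2
  have hj2 := j.2
  split_ifs <;> first
    | rfl
    | omega

lemma R_col_odd (n : ℕ) (hn : 3 ≤ n) (j : Fin (n-1)) (hj : (j:ℕ) % 2 = 1) (k : Fin (n-1)) :
    Rmat n k j = (if (k:ℕ) = (j:ℕ) - 1 then -Real.sin (Pθ n ((j:ℕ)/2)) else 0)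
      + (if (k:ℕ) = (j:ℕ) then Real.cos (Pθ n ((j:ℕ)/2)) else 0) := by
  simp only [Rmat, Matrix.of_apply, Fin.ext_iff, Pθ]
  have hk2 := k.2
  have hj2 := j.2
  split_ifs <;> first
    | rfl
    | omega
    | (have hd : (k:ℕ)/2 = (j:ℕ)/2 := by omega
       rw [hd]; ring)
    | simp_all

lemma sum_mul_ite {N : ℕ} (c : ℕ) (a : ℝ) (f : Fin N → ℝ) :
    (∑ k : Fin N, f k * (if (k:ℕ) = c then a else 0))
      = if h : c < N then f ⟨c, h⟩ * a else 0 := by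
  split_ifs with h
  · have hc : ∀ k : Fin N, (f k * (if (k:ℕ) = c then a else 0))
        = if k = ⟨c,h⟩ then f k * a else 0 := by
      intro k
      by_cases hk : k = ⟨c, h⟩
      · simp [hk]
      · have : (k:ℕ) ≠ c := fun hh => hk (Fin.ext hh)
        simp [this, hk]
    rw [Finset.sum_congr rfl (fun k _ => hc k)]
    simp
  · apply Finset.sum_eq_zero
    intro k _
    have : (k:ℕ) ≠ c := by have := k.2; omega
    simp [this]

lemma cos_nPθ (n b : ℕ) (hn : 0 < n) : Real.cos ((n:ℝ) * Pθ n b) = 1 := by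
  have h : (n:ℝ) * Pθ n b = (b+1 : ℕ) * (2 * Real.pi) := by
    have : (n:ℝ) ≠ 0 := Nat.cast_ne_zero.mpr hn.ne'
    simp only [Pθ]
    field_simp
    push_cast
    ring
  rw [h, Real.cos_nat_mul_two_pi]

lemma sin_nPθ (n b : ℕ) (hn : 0 < n) : Real.sin ((n:ℝ) * Pθ n b) = 0 := by
  have h : (n:ℝ) * Pθ n b = (2*(b+1) : ℕ) * Real.pi := by
    have : (n:ℝ) ≠ 0 := Nat.cast_ne_zero.mpr hn.ne'
    simp only [Pθ]
    field_simp
    push_cast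
    ring
  rw [h, Real.sin_nat_mul_pi]

lemma MP_eq_PR (n : ℕ) (hn : 3 ≤ n) : Mmat n * Pm n = Pm n * Rmat n := by
  have hn0 : 0 < n := by omega
  have h0 : 0 < n - 1 := by omega
  ext i j
  have hL : (Mmat n * Pm n) i j
      = (if h : (i:ℕ)+1 < n-1 then Pm n ⟨(i:ℕ)+1, h⟩ j else 0) - Pm n ⟨0, h0⟩ j := by
    rw [Matrix.mul_apply]
    simp only [Mmat, Matrix.of_apply, sub_mul, one_mul]
    rw [Finset.sum_sub_distrib, sum_ite_coe, sum_ite_coe]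
    simp only [dif_pos h0]
  rw [hL, Matrix.mul_apply]
  set σ := Pθ n ((j:ℕ)/2) with hσ
  set x : ℝ := ((i:ℕ):ℝ) + 1 with hx
  -- values of column j of Pm at various rows
  have hcos1 : ¬ ((i:ℕ)+1 < n-1) → Real.cos (x * σ + σ) = 1 := by
    intro h
    have h2 : (i:ℕ)+2 = n := by omega
    have he : x * σ + σ = (((i:ℕ)+2 : ℕ) : ℝ) * σ := by rw [hx]; push_cast; ring
    rw [he, h2]
    exact cos_nPθ n _ hn0
  have hsin1 : ¬ ((i:ℕ)+1 < n-1) → Real.sin (x * σ + σ) = 0 := by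
    intro h
    have h2 : (i:ℕ)+2 = n := by omega
    have he : x * σ + σ = (((i:ℕ)+2 : ℕ) : ℝ) * σ := by rw [hx]; push_cast; ring
    rw [he, h2]
    exact sin_nPθ n _ hn0
  rcases Nat.even_or_odd (j:ℕ) with hj | hj
  · have hj' : (j:ℕ) % 2 = 0 := Nat.even_iff.mp hj
    have hPij : Pm n i j = Real.cos (x * σ) - 1 := by simp [Pm, hj', hσ, hx]
    have hP0 : Pm n ⟨0, h0⟩ j = Real.cos (1 * σ) - 1 := by simp [Pm, hj', hσ]
    by_cases hj1 : (j:ℕ) + 1 < n - 1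
    · -- generic even column
      rw [Finset.sum_congr rfl (fun k _ => by rw [R_col_even n hn j hj' hj1 k, mul_add]),
        Finset.sum_add_distrib, sum_mul_ite, sum_mul_ite,
        dif_pos j.2, dif_pos (by omega : (j:ℕ)+1 < n-1)]
      have hP2 : Pm n i ⟨(j:ℕ)+1, by omega⟩ = -Real.sin (x * σ) := by
        have h1 : ¬ (((j:ℕ)+1) % 2 = 0) := by omega
        have h2 : ((j:ℕ)+1) / 2 = (j:ℕ)/2 := by omega
        simp [Pm, h1, h2, hσ, hx]
      have hkj : (⟨(j:ℕ), j.2⟩ : Fin (n-1)) = j := rfl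
      rw [hkj, hP2, hPij, hP0]
      split_ifs with h
      · have hP3 : Pm n ⟨(i:ℕ)+1, h⟩ j = Real.cos (x * σ + σ) - 1 := by
          simp only [Pm, Matrix.of_apply, hj', if_pos]
          rw [hσ, hx]
          norm_num
          ring_nf
        rw [hP3, Real.cos_add]
        simp only [← hσ]
        ring
      · have hc := hcos1 h
        rw [Real.cos_add] at hc
        rw [one_mul]
        linear_combination -hc
    · -- last even column (n even)
      rw [Finset.sum_congr rfl (fun k _ => by rw [R_col_last n hn j hj' hj1 k]),
        sum_mul_ite, dif_pos j.2]
      have hkj : (⟨(j:ℕ), j.2⟩ : Fin (n-1)) = j := rfl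
      rw [hkj, hPij, hP0]
      -- here σ = π
      have hσpi : σ = Real.pi := by
        have hj2 : 2 * ((j:ℕ)/2 + 1) = n := by have := j.2; omega
        rw [hσ, Pθ]
        have hne : (n:ℝ) ≠ 0 := Nat.cast_ne_zero.mpr hn0.ne'
        have h2 : (n:ℝ) = 2 * (((j:ℕ)/2 : ℕ):ℝ) + 2 := by
          exact_mod_cast congrArg (Nat.cast (R := ℝ)) (by omega : n = 2*((j:ℕ)/2) + 2)
        rw [h2] at hne ⊢
        field_simp
      split_ifs with h
      · have hP3 : Pm n ⟨(i:ℕ)+1, h⟩ j = Real.cos (x * σ + σ) - 1 := by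
          simp only [Pm, Matrix.of_apply, hj', if_pos]
          rw [hσ, hx]
          norm_num
          ring_nf
        rw [hP3, one_mul, hσpi, Real.cos_add, Real.cos_pi, Real.sin_pi]
        ring
      · have hc := hcos1 h
        rw [Real.cos_add, hσpi, Real.cos_pi, Real.sin_pi] at hc
        rw [one_mul, hσpi, Real.cos_pi]
        linear_combination -hc
  · -- odd column
    have hj' : (j:ℕ) % 2 = 1 := Nat.odd_iff.mp hj
    have hj'' : ¬ ((j:ℕ) % 2 = 0) := by omega
    have hPij : Pm n i j = -Real.sin (x * σ) := by simp [Pm, hj'', hσ, hx]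
    have hP0 : Pm n ⟨0, h0⟩ j = -Real.sin (1 * σ) := by simp [Pm, hj'', hσ]
    rw [Finset.sum_congr rfl (fun k _ => by rw [R_col_odd n hn j hj' k, mul_add]),
      Finset.sum_add_distrib, sum_mul_ite, sum_mul_ite,
      dif_pos (by omega : (j:ℕ) - 1 < n-1), dif_pos j.2]
    have hkj : (⟨(j:ℕ), j.2⟩ : Fin (n-1)) = j := rfl
    have hP2 : Pm n i ⟨(j:ℕ)-1, by omega⟩ = Real.cos (x * σ) - 1 := by
      have h1 : ((j:ℕ)-1) % 2 = 0 := by omega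
      have h2 : ((j:ℕ)-1) / 2 = (j:ℕ)/2 := by omega
      simp [Pm, h1, h2, hσ, hx]
    rw [hkj, hP2, hPij, hP0]
    split_ifs with h
    · have hP3 : Pm n ⟨(i:ℕ)+1, h⟩ j = -Real.sin (x * σ + σ) := by
        simp only [Pm, Matrix.of_apply, hj'', if_neg]
        rw [hσ, hx]
        norm_num
        ring_nf
      rw [hP3, Real.sin_add]
      simp only [← hσ]
      ring
    · have hc := hsin1 h
      rw [Real.sin_add] at hc
      rw [one_mul]
      linear_combination hc

section sums
open Real

lemma ang_sub (n a b k : ℕ) (hn : 0 < n) :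
    ((k:ℝ)+1) * Pθ n a - ((k:ℝ)+1) * Pθ n b
      = 2 * Real.pi * ((((a:ℤ) - b : ℤ)):ℝ) * ((k:ℝ)+1) / n := by
  have : (n:ℝ) ≠ 0 := Nat.cast_ne_zero.mpr hn.ne'
  simp only [Pθ]
  field_simp
  push_cast
  ring

lemma ang_add (n a b k : ℕ) (hn : 0 < n) :
    ((k:ℝ)+1) * Pθ n a + ((k:ℝ)+1) * Pθ n b
      = 2 * Real.pi * ((((a:ℤ) + b + 2 : ℤ)):ℝ) * ((k:ℝ)+1) / n := by
  have : (n:ℝ) ≠ 0 := Nat.cast_ne_zero.mpr hn.ne'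
  simp only [Pθ]
  field_simp
  push_cast
  ring

lemma ang_one (n b k : ℕ) (hn : 0 < n) :
    ((k:ℝ)+1) * Pθ n b = 2 * Real.pi * ((((b:ℤ) + 1 : ℤ)):ℝ) * ((k:ℝ)+1) / n := by
  have : (n:ℝ) ≠ 0 := Nat.cast_ne_zero.mpr hn.ne'
  simp only [Pθ]
  field_simp
  push_cast
  ring

lemma sum_cos_mul_cos (n a b : ℕ) (hn : 0 < n) :
    ∑ k ∈ Finset.range (n-1), Real.cos (((k:ℝ)+1) * Pθ n a) * Real.cos (((k:ℝ)+1) * Pθ n b)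
      = ((if (n:ℤ) ∣ ((a:ℤ) - b) then (n:ℝ)-1 else -1)
          + (if (n:ℤ) ∣ ((a:ℤ) + b + 2) then (n:ℝ)-1 else -1)) / 2 := by
  have hpt : ∀ k : ℕ, Real.cos (((k:ℝ)+1) * Pθ n a) * Real.cos (((k:ℝ)+1) * Pθ n b)
      = (Real.cos (2 * Real.pi * ((((a:ℤ) - b : ℤ)):ℝ) * ((k:ℝ)+1) / n)
          + Real.cos (2 * Real.pi * ((((a:ℤ) + b + 2 : ℤ)):ℝ) * ((k:ℝ)+1) / n)) / 2 := by
    intro k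
    rw [← ang_sub n a b k hn, ← ang_add n a b k hn, Real.cos_sub, Real.cos_add]
    ring
  rw [Finset.sum_congr rfl (fun k _ => hpt k), ← Finset.sum_div, Finset.sum_add_distrib,
    sum_cos_root n hn _, sum_cos_root n hn _]

lemma sum_sin_mul_sin (n a b : ℕ) (hn : 0 < n) :
    ∑ k ∈ Finset.range (n-1), Real.sin (((k:ℝ)+1) * Pθ n a) * Real.sin (((k:ℝ)+1) * Pθ n b)
      = ((if (n:ℤ) ∣ ((a:ℤ) - b) then (n:ℝ)-1 else -1)
          - (if (n:ℤ) ∣ ((a:ℤ) + b + 2) then (n:ℝ)-1 else -1)) / 2 := by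
  have hpt : ∀ k : ℕ, Real.sin (((k:ℝ)+1) * Pθ n a) * Real.sin (((k:ℝ)+1) * Pθ n b)
      = (Real.cos (2 * Real.pi * ((((a:ℤ) - b : ℤ)):ℝ) * ((k:ℝ)+1) / n)
          - Real.cos (2 * Real.pi * ((((a:ℤ) + b + 2 : ℤ)):ℝ) * ((k:ℝ)+1) / n)) / 2 := by
    intro k
    rw [← ang_sub n a b k hn, ← ang_add n a b k hn, Real.cos_sub, Real.cos_add]
    ring
  rw [Finset.sum_congr rfl (fun k _ => hpt k), ← Finset.sum_div, Finset.sum_sub_distrib,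
    sum_cos_root n hn _, sum_cos_root n hn _]

lemma sum_cos_mul_sin (n a b : ℕ) (hn : 0 < n) :
    ∑ k ∈ Finset.range (n-1), Real.cos (((k:ℝ)+1) * Pθ n a) * Real.sin (((k:ℝ)+1) * Pθ n b)
      = 0 := by
  have hpt : ∀ k : ℕ, Real.cos (((k:ℝ)+1) * Pθ n a) * Real.sin (((k:ℝ)+1) * Pθ n b)
      = (Real.sin (2 * Real.pi * ((((a:ℤ) + b + 2 : ℤ)):ℝ) * ((k:ℝ)+1) / n)
          - Real.sin (2 * Real.pi * ((((a:ℤ) - b : ℤ)):ℝ) * ((k:ℝ)+1) / n)) / 2 := by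
    intro k
    rw [← ang_sub n a b k hn, ← ang_add n a b k hn, Real.sin_sub, Real.sin_add]
    ring
  rw [Finset.sum_congr rfl (fun k _ => hpt k), ← Finset.sum_div, Finset.sum_sub_distrib,
    sum_sin_root n hn _, sum_sin_root n hn _]
  norm_num

lemma sum_sin_single (n b : ℕ) (hn : 0 < n) :
    ∑ k ∈ Finset.range (n-1), Real.sin (((k:ℝ)+1) * Pθ n b) = 0 := by
  rw [Finset.sum_congr rfl (fun k _ => by rw [ang_one n b k hn])]
  exact sum_sin_root n hn _

lemma sum_cos_single (n b : ℕ) (hn : 0 < n) :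
    ∑ k ∈ Finset.range (n-1), Real.cos (((k:ℝ)+1) * Pθ n b)
      = if (n:ℤ) ∣ ((b:ℤ) + 1) then (n:ℝ)-1 else -1 := by
  rw [Finset.sum_congr rfl (fun k _ => by rw [ang_one n b k hn])]
  exact sum_cos_root n hn _

end sums

lemma dvd_small_eq_zero (n m : ℤ) (hn : 0 < n) (h1 : -n < m) (h2 : m < n) (hd : n ∣ m) :
    m = 0 := by
  rcases hd with ⟨t, rfl⟩
  rcases lt_trichotomy t 0 with ht | ht | ht
  · nlinarith
  · simp [ht]
  · nlinarith

noncomputable def dvec (n : ℕ) : Fin (n-1) → ℝ :=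
  fun i => if 2*((i:ℕ)/2+1) = n then (n:ℝ) else (n:ℝ)/2

lemma QP_diag (n : ℕ) (hn : 3 ≤ n) : Qm n * Pm n = Matrix.diagonal (dvec n) := by
  have hn0 : 0 < n := by omega
  ext i j
  rw [Matrix.mul_apply]
  set a := (i:ℕ)/2 with ha
  set b := (j:ℕ)/2 with hb
  have hi2 : (i:ℕ) < n - 1 := i.2
  have hj2 : (j:ℕ) < n - 1 := j.2
  have hA : 2*(a+1) ≤ n := by omega
  have hB : 2*(b+1) ≤ n := by omega
  have hd1 : ((n:ℤ) ∣ ((a:ℤ) - b)) ↔ (a = b) := by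
    constructor
    · intro h
      have := dvd_small_eq_zero n ((a:ℤ) - b) (by exact_mod_cast hn0) (by omega) (by omega) h
      omega
    · intro h; rw [h]; simp
  have hd2 : ((n:ℤ) ∣ ((a:ℤ) + b + 2)) ↔ (a + b + 2 = n) := by
    constructor
    · intro h
      have h1 := Int.le_of_dvd (by omega) h
      omega
    · intro h; rw [show ((a:ℤ) + b + 2) = (n:ℤ) by omega]
  have hd3 : ¬ ((n:ℤ) ∣ ((a:ℤ) + 1)) := by
    intro h
    have h1 := Int.le_of_dvd (by omega) h
    omega
  rcases Nat.even_or_odd (i:ℕ) with hi | hi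
  · have hi' : (i:ℕ) % 2 = 0 := Nat.even_iff.mp hi
    rcases Nat.even_or_odd (j:ℕ) with hj | hj
    · -- even, even
      have hj' : (j:ℕ) % 2 = 0 := Nat.even_iff.mp hj
      have hconv : ∑ k : Fin (n-1), Qm n i k * Pm n k j
          = ∑ m ∈ Finset.range (n-1),
              (Real.cos (((m:ℝ)+1) * Pθ n a) * Real.cos (((m:ℝ)+1) * Pθ n b)
                - Real.cos (((m:ℝ)+1) * Pθ n a)) := by
        rw [← Fin.sum_univ_eq_sum_range
          (fun m : ℕ => Real.cos (((m:ℝ)+1) * Pθ n a) * Real.cos (((m:ℝ)+1) * Pθ n b)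
                - Real.cos (((m:ℝ)+1) * Pθ n a)) (n-1)]
        refine Finset.sum_congr rfl (fun k _ => ?_)
        simp only [Qm, Pm, Matrix.of_apply, if_pos hi', if_pos hj']
        ring
      rw [hconv, Finset.sum_sub_distrib, sum_cos_mul_cos n a b hn0, sum_cos_single n a hn0,
        if_neg hd3]
      simp only [Matrix.diagonal_apply, dvec, Fin.ext_iff, hd1, hd2]
      split_ifs <;> (first | ring1 | omega | (exfalso; omega))
    · -- even, odd : zero
      have hj' : ¬ ((j:ℕ) % 2 = 0) := by have := Nat.odd_iff.mp hj; omega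
      have hconv : ∑ k : Fin (n-1), Qm n i k * Pm n k j
          = ∑ m ∈ Finset.range (n-1),
              (-(Real.cos (((m:ℝ)+1) * Pθ n a) * Real.sin (((m:ℝ)+1) * Pθ n b))) := by
        rw [← Fin.sum_univ_eq_sum_range
          (fun m : ℕ => -(Real.cos (((m:ℝ)+1) * Pθ n a) * Real.sin (((m:ℝ)+1) * Pθ n b))) (n-1)]
        refine Finset.sum_congr rfl (fun k _ => ?_)
        simp only [Qm, Pm, Matrix.of_apply, if_pos hi', if_neg hj']
        ring
      rw [hconv, Finset.sum_neg_distrib, sum_cos_mul_sin n a b hn0]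
      simp only [Matrix.diagonal_apply, dvec, Fin.ext_iff]
      split_ifs <;> (first | ring1 | omega | (exfalso; omega))
  · have hi' : ¬ ((i:ℕ) % 2 = 0) := by have := Nat.odd_iff.mp hi; omega
    rcases Nat.even_or_odd (j:ℕ) with hj | hj
    · -- odd, even : zero
      have hj' : (j:ℕ) % 2 = 0 := Nat.even_iff.mp hj
      have hconv : ∑ k : Fin (n-1), Qm n i k * Pm n k j
          = ∑ m ∈ Finset.range (n-1),
              (-(Real.cos (((m:ℝ)+1) * Pθ n b) * Real.sin (((m:ℝ)+1) * Pθ n a))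
                + Real.sin (((m:ℝ)+1) * Pθ n a)) := by
        rw [← Fin.sum_univ_eq_sum_range
          (fun m : ℕ => -(Real.cos (((m:ℝ)+1) * Pθ n b) * Real.sin (((m:ℝ)+1) * Pθ n a))
                + Real.sin (((m:ℝ)+1) * Pθ n a)) (n-1)]
        refine Finset.sum_congr rfl (fun k _ => ?_)
        simp only [Qm, Pm, Matrix.of_apply, if_neg hi', if_pos hj']
        ring
      rw [hconv, Finset.sum_add_distrib, Finset.sum_neg_distrib, sum_cos_mul_sin n b a hn0,
        sum_sin_single n a hn0]
      simp only [Matrix.diagonal_apply, dvec, Fin.ext_iff]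
      split_ifs <;> (first | ring1 | omega | (exfalso; omega))
    · -- odd, odd
      have hj' : ¬ ((j:ℕ) % 2 = 0) := by have := Nat.odd_iff.mp hj; omega
      have hconv : ∑ k : Fin (n-1), Qm n i k * Pm n k j
          = ∑ m ∈ Finset.range (n-1),
              (Real.sin (((m:ℝ)+1) * Pθ n a) * Real.sin (((m:ℝ)+1) * Pθ n b)) := by
        rw [← Fin.sum_univ_eq_sum_range
          (fun m : ℕ => Real.sin (((m:ℝ)+1) * Pθ n a) * Real.sin (((m:ℝ)+1) * Pθ n b)) (n-1)]
        refine Finset.sum_congr rfl (fun k _ => ?_)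
        simp only [Qm, Pm, Matrix.of_apply, if_neg hi', if_neg hj']
        ring
      rw [hconv, sum_sin_mul_sin n a b hn0]
      have hAlt : 2*(a+1) < n := by omega
      simp only [Matrix.diagonal_apply, dvec, Fin.ext_iff, hd1, hd2]
      split_ifs <;> (first | ring1 | omega | (exfalso; omega))


/-- `𝓜` is conjugate over `ℝ` to the block-rotation matrix `ℛ_n`:
there is an invertible real matrix `P` with `P⁻¹ 𝓜 P = ℛ_n`. -/
theorem Mmat_conjugate_Rmat (n : ℕ) (hn : 3 ≤ n) :
    ∃ P : Matrix (Fin (n - 1)) (Fin (n - 1)) ℝ,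
      IsUnit P ∧ P⁻¹ * Mmat n * P = Rmat n := by
  have hn0 : 0 < n := by omega
  have hnR : (0:ℝ) < n := by exact_mod_cast hn0
  have hQP := QP_diag n hn
  have hdet : (Pm n).det ≠ 0 := by
    intro h
    have hd : (Qm n * Pm n).det = 0 := by rw [Matrix.det_mul, h, mul_zero]
    rw [hQP, Matrix.det_diagonal] at hd
    have hne : ∀ i : Fin (n-1), dvec n i ≠ 0 := by
      intro i
      simp only [dvec]
      split_ifs
      · exact ne_of_gt hnR
      · exact ne_of_gt (by linarith)
    exact (Finset.prod_ne_zero_iff.mpr (fun i _ => hne i)) hd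
  have hdu : IsUnit (Pm n).det := isUnit_iff_ne_zero.mpr hdet
  have hu : IsUnit (Pm n) := (Matrix.isUnit_iff_isUnit_det _).mpr hdu
  refine ⟨Pm n, hu, ?_⟩
  have hMP := MP_eq_PR n hn
  calc (Pm n)⁻¹ * Mmat n * Pm n = (Pm n)⁻¹ * (Mmat n * Pm n) := by rw [mul_assoc]
    _ = (Pm n)⁻¹ * (Pm n * Rmat n) := by rw [hMP]
    _ = ((Pm n)⁻¹ * Pm n) * Rmat n := by rw [mul_assoc]
    _ = Rmat n := by rw [Matrix.nonsing_inv_mul _ hdu, one_mul]
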